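/- arXiv:math/0506223 — 2 statements merged into one kernel-verified Lean document; each statement's English description precedes it below -/
import Mathlib

section
/- Let K have characteristic zero and let I, J be monomial ideals in K[x_1,...,x_n]. A monomial m is a standard monomial of I*J (i.e., m ∉ I*J) if and only if m = m_1·m_2 for some monomials m_1 ∉ I and m_2 ∉ J. -/
/-!
Substituting `x = y + z` kills the generators `y_i + z_i - x_i`, so `f ∈ I * J` iff
`f(y + z) ∈ I(y) + J(z)`. For `f = x^a` this is `∏ (y_i + z_i)^{a_i}`, a combination of the
monomials `y^b z^c` with `b + c = a` whose coefficients are positive integers, hence nonzero in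
characteristic zero. As `I(y) + J(z)` is a monomial ideal, `x^a ∈ I * J` iff all these `y^b z^c`
lie in it, i.e. iff `x^b ∈ I` or `x^c ∈ J` whenever `b + c = a`.
-/

open MvPolynomial

/-- The join `I * J` of two ideals in `K[x_1,...,x_n]`: the elimination ideal
`(I(y) + J(z) + ⟨y_i + z_i - x_i⟩) ∩ K[x]`, realized in the polynomial ring on
`Fin n ⊕ (Fin n ⊕ Fin n)` where `Sum.inl` are the `x`-variables, `Sum.inr ∘ Sum.inl`
the `y`-variables and `Sum.inr ∘ Sum.inr` the `z`-variables. -/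
noncomputable def joinIdeal {K : Type*} [Field K] {n : ℕ}
    (I J : Ideal (MvPolynomial (Fin n) K)) : Ideal (MvPolynomial (Fin n) K) :=
  Ideal.comap (rename (Sum.inl : Fin n → Fin n ⊕ (Fin n ⊕ Fin n)))
    (Ideal.map (rename (fun i : Fin n => (Sum.inr (Sum.inl i) : Fin n ⊕ (Fin n ⊕ Fin n)))) I ⊔
     Ideal.map (rename (fun i : Fin n => (Sum.inr (Sum.inr i) : Fin n ⊕ (Fin n ⊕ Fin n)))) J ⊔
     Ideal.span {p : MvPolynomial (Fin n ⊕ (Fin n ⊕ Fin n)) K | ∃ i : Fin n,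
       p = X (Sum.inr (Sum.inl i)) + X (Sum.inr (Sum.inr i)) - X (Sum.inl i)})

/-- The `r`-th secant ideal `I^{r}`, the `r`-fold join of `I` with itself.
(The `0`-th secant is the irrelevant maximal ideal `⟨x_1,...,x_n⟩`, the identity for join.) -/
noncomputable def secantIdeal {K : Type*} [Field K] {n : ℕ}
    (I : Ideal (MvPolynomial (Fin n) K)) : ℕ → Ideal (MvPolynomial (Fin n) K)
  | 0 => Ideal.span (Set.range X)
  | 1 => I
  | (r + 2) => joinIdeal (secantIdeal I (r + 1)) I

/-- An ideal of `K[x_1,...,x_n]` is a monomial ideal if it is generated by monomials. -/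
def IsMonomialIdeal {K : Type*} [Field K] {n : ℕ} (I : Ideal (MvPolynomial (Fin n) K)) : Prop :=
  ∃ S : Set (Fin n →₀ ℕ), I = Ideal.span ((fun m => monomial m (1 : K)) '' S)

section PowExpansion

variable {ι R : Type*} [CommSemiring R]

theorem exists_add_pow_eq_pow_add (x y : R) (k : ℕ) : ∃ r, (x + y) ^ k = x ^ k + r := by
  induction k with
  | zero => exact ⟨0, by simp⟩
  | succ k ih =>
    obtain ⟨r, hr⟩ := ih
    exact ⟨x ^ k * y + r * (x + y), by rw [pow_succ, hr]; ring⟩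

theorem Finsupp.prod_pow_add_index (a b : ι →₀ ℕ) (u : ι → R) :
    ((a + b).prod fun i k => u i ^ k) = (a.prod fun i k => u i ^ k) * b.prod fun i k => u i ^ k :=
  Finsupp.prod_add_index' (fun _ => pow_zero _) fun _ => pow_add _

theorem Finsupp.exists_prod_add_pow_eq_prod_pow_add (u v : ι → R) (a : ι →₀ ℕ) :
    ∃ r, (a.prod fun i k => (u i + v i) ^ k) = (a.prod fun i k => u i ^ k) + r := by
  induction a using Finsupp.induction_linear with
  | zero => exact ⟨0, by simp⟩
  | add f g hf hg =>
    obtain ⟨r, hr⟩ := hf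
    obtain ⟨s, hs⟩ := hg
    refine ⟨(f.prod fun i k => u i ^ k) * s + r * ((g.prod fun i k => u i ^ k) + s), ?_⟩
    rw [Finsupp.prod_pow_add_index, Finsupp.prod_pow_add_index, hr, hs]
    ring
  | single i k =>
    simpa only [Finsupp.prod_single_index, pow_zero] using exists_add_pow_eq_pow_add (u i) (v i) k

theorem Finsupp.exists_prod_add_pow_add_eq (u v : ι → R) (b c : ι →₀ ℕ) :
    ∃ r, ((b + c).prod fun i k => (u i + v i) ^ k) =
      (b.prod fun i k => u i ^ k) * (c.prod fun i k => v i ^ k) + r := by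
  obtain ⟨r, hr⟩ := Finsupp.exists_prod_add_pow_eq_prod_pow_add u v b
  obtain ⟨s, hs⟩ := Finsupp.exists_prod_add_pow_eq_prod_pow_add v u c
  refine ⟨(b.prod fun i k => u i ^ k) * s + r * ((c.prod fun i k => v i ^ k) + s), ?_⟩
  rw [Finsupp.prod_pow_add_index b c (fun i => u i + v i), hr]
  simp only [add_comm (u _) (v _), hs]
  ring

theorem Ideal.finsuppProd_add_pow_mem {M : Ideal R} (u v : ι → R) (a : ι →₀ ℕ)
    (h : ∀ b c, b + c = a → (b.prod fun i k => u i ^ k) * (c.prod fun i k => v i ^ k) ∈ M) :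
    (a.prod fun i k => (u i + v i) ^ k) ∈ M := by
  -- Generalizing over `M` lets the case `f + g` pass to colon ideals.
  induction a using Finsupp.induction_linear generalizing M with
  | zero => simpa using h 0 0 (add_zero 0)
  | add f g hf hg =>
    rw [Finsupp.prod_pow_add_index, ← smul_eq_mul, ← Submodule.mem_colon_singleton]
    refine hf fun b c hbc => ?_
    rw [Submodule.mem_colon_singleton, smul_eq_mul, mul_comm, ← smul_eq_mul,
      ← Submodule.mem_colon_singleton]
    refine hg fun b' c' hbc' => ?_
    rw [Submodule.mem_colon_singleton, smul_eq_mul]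
    convert h (b' + b) (c' + c) (by rw [← hbc, ← hbc']; abel) using 1
    simp only [Finsupp.prod_pow_add_index]
    ring
  | single i k =>
    rw [Finsupp.prod_single_index (by rw [pow_zero]), add_pow]
    refine Ideal.sum_mem _ fun m hm => Ideal.mul_mem_right _ _ ?_
    have hmk : m ≤ k := Nat.lt_succ_iff.1 (Finset.mem_range.1 hm)
    simpa only [Finsupp.prod_single_index, pow_zero] using
      h (Finsupp.single i m) (Finsupp.single i (k - m))
        (by rw [← Finsupp.single_add, Nat.add_sub_cancel' hmk])

end PowExpansion

theorem Ideal.mem_sup_iff_apply_mem {A : Type*} [CommRing A] {N R : Ideal A} {φ : A →+* A}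
    (hN : N ≤ N.comap φ) (hR : R ≤ RingHom.ker φ)
    (hφ : ∀ q, Ideal.Quotient.mk R (φ q) = Ideal.Quotient.mk R q) (p : A) :
    p ∈ N ⊔ R ↔ φ p ∈ N := by
  refine ⟨fun hp => ?_, fun hp => ?_⟩
  · obtain ⟨q, hq, r, hr, rfl⟩ := Submodule.mem_sup.1 hp
    rw [map_add, RingHom.mem_ker.1 (hR hr), add_zero]
    exact hN hq
  · have hpφ : p - φ p ∈ R := Ideal.Quotient.eq.1 (hφ p).symm
    simpa using add_mem (Ideal.mem_sup_left hp) (Ideal.mem_sup_right hpφ : p - φ p ∈ N ⊔ R)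

namespace MvPolynomial

variable {σ τ R : Type*} [CommSemiring R]

theorem rename_monomial_one_eq_prod (f : σ → τ) (b : σ →₀ ℕ) :
    rename f (monomial b (1 : R)) = b.prod fun i k => X (f i) ^ k := by
  rw [← prod_X_pow_eq_monomial, ← Finsupp.prod, map_finsuppProd]
  simp only [map_pow, rename_X]

theorem map_rename_span_monomial_image (f : σ → τ) (S : Set (σ →₀ ℕ)) :
    (Ideal.span ((fun s => monomial s (1 : R)) '' S)).map (rename f) =
      Ideal.span ((fun s => monomial s (1 : R)) '' (Finsupp.mapDomain f '' S)) := by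
  rw [Ideal.map_span, Set.image_image, Set.image_image]
  simp_rw [rename_monomial]

theorem monomial_one_mem_ideal_span_monomial_image [Nontrivial R] {S : Set (σ →₀ ℕ)}
    {b : σ →₀ ℕ} :
    monomial b (1 : R) ∈ Ideal.span ((fun s => monomial s (1 : R)) '' S) ↔ ∃ s ∈ S, s ≤ b := by
  classical
  simp [mem_ideal_span_monomial_image, support_monomial]

end MvPolynomial

theorem Finsupp.mapDomain_le_mapDomain_add_iff {ι κ : Type*} {f g : ι → κ}
    (hf : f.Injective) (hfg : ∀ i j, f i ≠ g j) (t b c : ι →₀ ℕ) :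
    t.mapDomain f ≤ b.mapDomain f + c.mapDomain g ↔ t ≤ b := by
  refine ⟨fun h i => ?_, fun h => (Finsupp.mapDomain_mono h).trans le_self_add⟩
  have hi := h (f i)
  rwa [Finsupp.add_apply, Finsupp.mapDomain_apply hf, Finsupp.mapDomain_apply hf,
    Finsupp.mapDomain_of_notMem_range _ _ (by rintro ⟨j, hj⟩; exact hfg i j hj.symm),
    add_zero] at hi

namespace JoinIdeal

variable {K : Type*} [Field K] {n : ℕ}

abbrev yVar (i : Fin n) : Fin n ⊕ (Fin n ⊕ Fin n) := Sum.inr (Sum.inl i)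

abbrev zVar (i : Fin n) : Fin n ⊕ (Fin n ⊕ Fin n) := Sum.inr (Sum.inr i)

variable (K n) in
noncomputable def substSum :
    MvPolynomial (Fin n ⊕ (Fin n ⊕ Fin n)) K →ₐ[K] MvPolynomial (Fin n ⊕ (Fin n ⊕ Fin n)) K :=
  aeval (Sum.elim (fun i => X (yVar i) + X (zVar i)) (fun w => X (Sum.inr w)))

theorem substSum_rename_inr {ι : Type*} (g : ι → Fin n ⊕ Fin n) (p : MvPolynomial ι K) :
    substSum K n (rename (fun i => Sum.inr (g i)) p) = rename (fun i => Sum.inr (g i)) p := by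
  rw [← AlgHom.comp_apply]
  exact AlgHom.congr_fun (algHom_ext fun _ => by simp [substSum]) p

theorem substSum_rename_inl (f : MvPolynomial (Fin n) K) :
    substSum K n (rename Sum.inl f) = aeval (fun i => X (yVar i) + X (zVar i)) f := by
  rw [substSum, aeval_rename]
  rfl

theorem mk_substSum (R : Ideal (MvPolynomial (Fin n ⊕ (Fin n ⊕ Fin n)) K))
    (hR : ∀ i, X (yVar i) + X (zVar i) - X (Sum.inl i) ∈ R) (p) :
    Ideal.Quotient.mk R (substSum K n p) = Ideal.Quotient.mk R p := by
  rw [← Ideal.Quotient.mkₐ_eq_mk K, ← AlgHom.comp_apply]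
  refine AlgHom.congr_fun (algHom_ext fun v => ?_) p
  rcases v with i | w
  · change Ideal.Quotient.mk R (substSum K n (X (Sum.inl i))) =
      Ideal.Quotient.mk R (X (Sum.inl i))
    rw [substSum, aeval_X, Sum.elim_inl, Ideal.Quotient.eq]
    exact hR i
  · simp [substSum]

theorem mem_joinIdeal_iff {I J : Ideal (MvPolynomial (Fin n) K)} (f : MvPolynomial (Fin n) K) :
    f ∈ joinIdeal I J ↔ aeval (fun i => (X (yVar i) + X (zVar i) : MvPolynomial _ K)) f ∈
      I.map (rename yVar) ⊔ J.map (rename zVar) := by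
  have hN : I.map (rename yVar) ⊔ J.map (rename zVar) ≤
      (I.map (rename yVar) ⊔ J.map (rename zVar)).comap (substSum K n) := by
    refine sup_le (Ideal.map_le_iff_le_comap.2 fun p hp => ?_)
      (Ideal.map_le_iff_le_comap.2 fun p hp => ?_)
    · rw [Ideal.mem_comap, Ideal.mem_comap, substSum_rename_inr Sum.inl]
      exact Ideal.mem_sup_left (Ideal.mem_map_of_mem _ hp)
    · rw [Ideal.mem_comap, Ideal.mem_comap, substSum_rename_inr Sum.inr]
      exact Ideal.mem_sup_right (Ideal.mem_map_of_mem _ hp)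
  rw [joinIdeal, Ideal.mem_comap, ← substSum_rename_inl]
  refine Ideal.mem_sup_iff_apply_mem (φ := (substSum K n).toRingHom) hN ?_
    (mk_substSum _ fun i => ?_) _
  · rw [Ideal.span_le]
    rintro _ ⟨i, rfl⟩
    simp [substSum]
  · exact Ideal.subset_span ⟨i, rfl⟩

theorem yVar_injective : (yVar : Fin n → _).Injective :=
  Sum.inr_injective.comp Sum.inl_injective

theorem zVar_injective : (zVar : Fin n → _).Injective :=
  Sum.inr_injective.comp Sum.inr_injective

theorem mapDomain_add_mem_support_aeval [CharZero K] (b c : Fin n →₀ ℕ) :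
    b.mapDomain yVar + c.mapDomain zVar ∈
      (aeval (fun i => (X (yVar i) + X (zVar i) : MvPolynomial _ K))
        (monomial (b + c) (1 : K))).support := by
  -- Expand over `ℕ`, where nothing cancels, and map to `K` injectively.
  obtain ⟨r, hr⟩ := Finsupp.exists_prod_add_pow_add_eq
    (fun i => (X (yVar i) : MvPolynomial (Fin n ⊕ (Fin n ⊕ Fin n)) ℕ)) (fun i => X (zVar i)) b c
  have hmap : aeval (fun i => (X (yVar i) + X (zVar i) : MvPolynomial _ K))
      (monomial (b + c) (1 : K)) =
        map (Nat.castRingHom K) ((b + c).prod fun i k => (X (yVar i) + X (zVar i)) ^ k) := by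
    rw [aeval_monomial, map_one, one_mul, map_finsuppProd]
    simp only [map_pow, map_add, map_X]
  rw [hmap, support_map_of_injective _ Nat.cast_injective, hr, ← rename_monomial_one_eq_prod,
    ← rename_monomial_one_eq_prod, rename_monomial, rename_monomial, monomial_mul, one_mul,
    mem_support_iff, coeff_add, coeff_monomial, if_pos rfl]
  omega

theorem monomial_mem_joinIdeal_iff [CharZero K] {I J : Ideal (MvPolynomial (Fin n) K)}
    (hI : IsMonomialIdeal I) (hJ : IsMonomialIdeal J) (a : Fin n →₀ ℕ) :
    monomial a (1 : K) ∈ joinIdeal I J ↔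
      ∀ b c, b + c = a → monomial b (1 : K) ∈ I ∨ monomial c (1 : K) ∈ J := by
  rw [mem_joinIdeal_iff]
  refine ⟨fun h b c hbc => ?_, fun h => ?_⟩
  · subst hbc
    obtain ⟨SI, rfl⟩ := hI
    obtain ⟨SJ, rfl⟩ := hJ
    rw [map_rename_span_monomial_image, map_rename_span_monomial_image, ← Ideal.span_union,
      ← Set.image_union, mem_ideal_span_monomial_image] at h
    obtain ⟨s, hs, hle⟩ := h _ (mapDomain_add_mem_support_aeval b c)
    simp only [monomial_one_mem_ideal_span_monomial_image]
    rcases hs with ⟨t, ht, rfl⟩ | ⟨t, ht, rfl⟩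
    · refine Or.inl ⟨t, ht, ?_⟩
      exact (Finsupp.mapDomain_le_mapDomain_add_iff yVar_injective (by simp) t b c).1 hle
    · refine Or.inr ⟨t, ht, ?_⟩
      rw [add_comm] at hle
      exact (Finsupp.mapDomain_le_mapDomain_add_iff zVar_injective (by simp) t c b).1 hle
  · rw [aeval_monomial, map_one, one_mul]
    refine Ideal.finsuppProd_add_pow_mem _ _ a fun b c hbc => ?_
    rw [← rename_monomial_one_eq_prod, ← rename_monomial_one_eq_prod]
    rcases h b c hbc with hb | hc
    · exact Ideal.mem_sup_left (Ideal.mul_mem_right _ _ (Ideal.mem_map_of_mem _ hb))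
    · exact Ideal.mem_sup_right (Ideal.mul_mem_left _ _ (Ideal.mem_map_of_mem _ hc))

end JoinIdeal

/-- in characteristic zero, a monomial `x^a` is standard for `I*J`
(i.e. `x^a ∉ I*J`) iff it is a product of a standard monomial of `I` and one of `J`. -/
theorem stmt_4 (K : Type*) [Field K] [CharZero K] (n : ℕ)
    (I J : Ideal (MvPolynomial (Fin n) K))
    (hI : IsMonomialIdeal I) (hJ : IsMonomialIdeal J) (a : Fin n →₀ ℕ) :
    monomial a (1 : K) ∉ joinIdeal I J ↔
      ∃ b c : Fin n →₀ ℕ, b + c = a ∧ monomial b (1 : K) ∉ I ∧ monomial c (1 : K) ∉ J := by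
  simp only [JoinIdeal.monomial_mem_joinIdeal_iff hI hJ, not_forall, not_or, exists_prop]
end

section
/- Let P be a finite poset on [n]. A subset V ⊆ [n] can be partitioned into r chains of P if and only if V contains no antichain of cardinality r+1. Consequently, the r-th secant of the Stanley–Reisner ideal J(P) (generated by the 2-element antichains of P) is generated by the monomials ∏_{i∈A} x_i where A ranges over antichains of cardinality r+1 in P. -/
/-!
Dilworth's theorem is proved by Galvin's induction: remove a maximal element `a`, cover the rest
by `r` chains, and split off a chain through `a` that meets every antichain of size `r` of the
rest. Conversely an antichain meets each chain at most once.

For the secant ideals it suffices, by induction on `r`, to show `J_{m+1} * J_2 = J_{m+2}`, where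
`J_k` is spanned by the monomials of `k`-element antichains. Modulo the join relations
`x_i ≡ y_i + z_i`, so a monomial of an `(m+2)`-antichain expands into terms each containing either
`m+1` of the `y`'s or two of the `z`'s. Conversely, if the support of a monomial `x^u` occurring
in an element of the join contains no `(m+2)`-antichain, Dilworth splits it into `m` chains `Y`
and one more chain `Z`; keeping only the variables `x` on `supp u`, `y` on `Y` and `z` on `Z`
kills the join ideal but not the coefficient of `x^u`.
-/

open MvPolynomial

open Finset

section Dilworth

variable {α : Type*} [PartialOrder α]

/-- A partition of `V` into `r` chains, recorded by the index `c x < r` of the chain of `x`. -/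
structure IsChainColoring (V : Set α) (r : ℕ) (c : α → ℕ) : Prop where
  lt : ∀ x ∈ V, c x < r
  comparable : ∀ x ∈ V, ∀ y ∈ V, c x = c y → x ≤ y ∨ y ≤ x

namespace IsChainColoring

variable {V : Set α} {r : ℕ} {c : α → ℕ}

theorem injOn (hc : IsChainColoring V r c) {A : Set α} (hAV : A ⊆ V)
    (hA : IsAntichain (· ≤ ·) A) : A.InjOn c := fun x hx y hy hxy =>
  (hc.comparable x (hAV hx) y (hAV hy) hxy).elim (hA.eq hx hy) fun h => (hA.eq hy hx h).symm

theorem card_le (hc : IsChainColoring V r c) {A : Finset α} (hAV : ↑A ⊆ V)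
    (hA : IsAntichain (· ≤ ·) (A : Set α)) : #A ≤ r := by
  simpa using card_le_card_of_injOn c (t := range r)
    (fun x hx => mem_coe.2 (mem_range.2 (hc.lt x (hAV hx)))) (hc.injOn hAV hA)

theorem exists_mem_color (hc : IsChainColoring V r c) {A : Finset α} (hAV : ↑A ⊆ V)
    (hA : IsAntichain (· ≤ ·) (A : Set α)) (hAr : #A = r) {t : ℕ} (ht : t < r) :
    ∃ b ∈ A, c b = t := by
  have himage : A.image c = range r := by
    refine eq_of_subset_of_card_le (fun _ h => ?_) ?_
    · obtain ⟨x, hx, rfl⟩ := mem_image.1 h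
      exact mem_range.2 (hc.lt x (hAV hx))
    · rw [card_image_of_injOn (hc.injOn hAV hA), hAr, card_range]
  exact mem_image.1 (himage ▸ mem_range.2 ht)

theorem insertChain {K : Set α} [DecidablePred (· ∈ K)] (hK : IsChain (· ≤ ·) K)
    (hc : IsChainColoring (V \ K) r c) :
    IsChainColoring V (r + 1) fun x => if x ∈ K then r else c x := by
  refine ⟨fun x hx => ?_, fun x hx y hy hxy => ?_⟩
  · split_ifs with hxK
    · exact r.lt_succ_self
    · exact (hc.lt x ⟨hx, hxK⟩).trans r.lt_succ_self
  · split_ifs at hxy with hxK hyK hyK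
    · exact hK.total hxK hyK
    · exact absurd hxy (hc.lt y ⟨hy, hyK⟩).ne'
    · exact absurd hxy (hc.lt x ⟨hx, hxK⟩).ne
    · exact hc.comparable x ⟨hx, hxK⟩ y ⟨hy, hyK⟩ hxy

theorem exists_top_of_color {W : Finset α} (hc : IsChainColoring (W : Set α) r c)
    {A₀ : Finset α} (hA₀W : A₀ ⊆ W) (hA₀ : IsAntichain (· ≤ ·) (A₀ : Set α)) (hA₀r : #A₀ = r)
    {t : ℕ} (ht : t < r) :
    ∃ x, (∃ A ⊆ W, IsAntichain (· ≤ ·) (A : Set α) ∧ #A = r ∧ x ∈ A) ∧ c x = t ∧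
      ∀ A ⊆ W, IsAntichain (· ≤ ·) (A : Set α) → #A = r → ∀ b ∈ A, c b = t → b ≤ x := by
  classical
  set S := W.filter fun y => c y = t ∧ ∃ A ⊆ W, IsAntichain (· ≤ ·) (A : Set α) ∧ #A = r ∧ y ∈ A
  obtain ⟨b₀, hb₀, hcb₀⟩ := hc.exists_mem_color (coe_subset.2 hA₀W) hA₀ hA₀r ht
  obtain ⟨x, hx⟩ := S.exists_maximal ⟨b₀, mem_filter.2 ⟨hA₀W hb₀, hcb₀, A₀, hA₀W, hA₀, hA₀r, hb₀⟩⟩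
  obtain ⟨hxW, hcx, hxA⟩ := mem_filter.1 hx.prop
  refine ⟨x, hxA, hcx, fun A hAW hA hAr b hb hcb => ?_⟩
  have hbS : b ∈ S := mem_filter.2 ⟨hAW hb, hcb, A, hAW, hA, hAr, hb⟩
  exact (hc.comparable b (hAW hb) x hxW (hcb.trans hcx.symm)).elim id (hx.2 hbS)

theorem isAntichain_image_tops {W : Finset α} (hc : IsChainColoring (W : Set α) r c) {x : ℕ → α}
    (hxA : ∀ t < r, ∃ A ⊆ W, IsAntichain (· ≤ ·) (A : Set α) ∧ #A = r ∧ x t ∈ A)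
    (hcx : ∀ t < r, c (x t) = t)
    (hx : ∀ t < r, ∀ A ⊆ W, IsAntichain (· ≤ ·) (A : Set α) → #A = r → ∀ b ∈ A, c b = t → b ≤ x t) :
    IsAntichain (· ≤ ·) (x '' Set.Iio r) := by
  rintro _ ⟨s, hs, rfl⟩ _ ⟨t, ht, rfl⟩ hne hle
  obtain ⟨A, hAW, hA, hAr, hxtA⟩ := hxA t ht
  obtain ⟨b, hbA, hcb⟩ := hc.exists_mem_color (coe_subset.2 hAW) hA hAr hs
  have hb : b = x t := hA.eq hbA hxtA ((hx s hs A hAW hA hAr b hbA hcb).trans hle)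
  exact hne (congrArg x ((hcb.symm.trans (congrArg c hb)).trans (hcx t ht)))

end IsChainColoring

/-- Galvin's step. Every antichain of size `r` in `V.erase a` meets every colour class; let `x t`
be the largest element of colour `t` lying on such an antichain. Some `x t₀` lies below `a`, since
otherwise the `x t` and `a` would form an antichain of size `r + 1`, and the chain is `a` together
with the elements of colour `t₀` below `x t₀`. -/
theorem exists_chain_antichain_card_lt [DecidableEq α] {V : Finset α} {a : α}
    (ha : Maximal (· ∈ V) a) {r : ℕ} {c : α → ℕ} (hc : IsChainColoring (V.erase a : Set α) r c)
    (hV : ∀ A ⊆ V, IsAntichain (· ≤ ·) (A : Set α) → #A ≤ r) :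
    ∃ K ⊆ V, a ∈ K ∧ IsChain (· ≤ ·) (K : Set α) ∧
      ∀ A ⊆ V \ K, IsAntichain (· ≤ ·) (A : Set α) → #A < r := by
  classical
  by_cases hmax : ∃ A ⊆ V.erase a, IsAntichain (· ≤ ·) (A : Set α) ∧ #A = r
  swap
  · refine ⟨{a}, singleton_subset_iff.2 ha.prop, mem_singleton_self a,
      Set.Subsingleton.isChain (by simp), fun A hA hAnti => ?_⟩
    rw [sdiff_singleton_eq_erase] at hA
    exact (hV A (hA.trans (erase_subset a V)) hAnti).lt_of_ne fun hAr => hmax ⟨A, hA, hAnti, hAr⟩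
  obtain ⟨A₀, hA₀W, hA₀, hA₀r⟩ := hmax
  have : Nonempty α := ⟨a⟩
  choose! x hxA hcx htop using fun t (ht : t < r) => hc.exists_top_of_color hA₀W hA₀ hA₀r ht
  have hxW : ∀ t < r, x t ∈ V.erase a := fun t ht => by
    obtain ⟨A, hAW, -, -, hxtA⟩ := hxA t ht
    exact hAW hxtA
  obtain ⟨t₀, ht₀, hxa⟩ : ∃ t < r, x t ≤ a := by
    by_contra! hxa
    have hanti : IsAntichain (· ≤ ·) (↑(insert a ((range r).image x)) : Set α) := by
      rw [coe_insert, coe_image, coe_range]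
      refine (hc.isAntichain_image_tops hxA hcx htop).insert ?_ ?_
      · rintro _ ⟨t, ht, rfl⟩ -
        exact hxa t ht
      · rintro _ ⟨t, ht, rfl⟩ hne hle
        exact hne (ha.eq_of_le (mem_of_mem_erase (hxW t ht)) hle)
    have hcard : #(insert a ((range r).image x)) = r + 1 := by
      rw [card_insert_of_notMem, card_image_of_injOn, card_range]
      · intro s hs t ht hst
        rw [← hcx s (mem_range.1 hs), ← hcx t (mem_range.1 ht), hst]
      · simp only [mem_image, mem_range, not_exists, not_and]
        exact fun t ht hxt => notMem_erase a V (hxt ▸ hxW t ht)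
    have := hV _ (insert_subset ha.prop fun _ h => by
      obtain ⟨t, ht, rfl⟩ := mem_image.1 h
      exact mem_of_mem_erase (hxW t (mem_range.1 ht))) hanti
    omega
  refine ⟨insert a ((V.erase a).filter fun y => c y = t₀ ∧ y ≤ x t₀),
    insert_subset ha.prop ((filter_subset _ _).trans (erase_subset a V)),
    mem_insert_self _ _, ?_, fun A hA hAnti => ?_⟩
  · rw [coe_insert]
    refine IsChain.insert (fun y hy z hz _ => ?_) fun y hy _ => Or.inr ?_
    · obtain ⟨hyW, hcy, -⟩ := mem_filter.1 (mem_coe.1 hy)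
      obtain ⟨hzW, hcz, -⟩ := mem_filter.1 (mem_coe.1 hz)
      exact hc.comparable y hyW z hzW (hcy.trans hcz.symm)
    · exact (mem_filter.1 (mem_coe.1 hy)).2.2.trans hxa
  have hAW : A ⊆ V.erase a := fun y hy => by
    obtain ⟨hyV, hyK⟩ := mem_sdiff.1 (hA hy)
    exact mem_erase.2 ⟨fun h => hyK (h ▸ mem_insert_self _ _), hyV⟩
  refine (hV A (hAW.trans (erase_subset a V)) hAnti).lt_of_ne fun hAr => ?_
  obtain ⟨b, hbA, hcb⟩ := hc.exists_mem_color (coe_subset.2 hAW) hAnti hAr ht₀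
  refine (mem_sdiff.1 (hA hbA)).2 (mem_insert_of_mem (mem_filter.2 ⟨hAW hbA, hcb, ?_⟩))
  exact htop t₀ ht₀ A hAW hAnti hAr b hbA hcb

/-- Dilworth's theorem. -/
theorem exists_isChainColoring (V : Finset α) {r : ℕ}
    (hV : ∀ A ⊆ V, IsAntichain (· ≤ ·) (A : Set α) → #A ≤ r) :
    ∃ c, IsChainColoring (V : Set α) r c := by
  classical
  induction V using Finset.strongInduction generalizing r with
  | H V ih =>
  obtain rfl | hne := V.eq_empty_or_nonempty
  · exact ⟨0, by simp, by simp⟩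
  obtain ⟨a, ha⟩ := V.exists_maximal hne
  obtain ⟨c, hc⟩ := ih _ (erase_ssubset ha.prop) fun A hA => hV A (hA.trans (erase_subset a V))
  obtain ⟨K, hKV, haK, hK, hVK⟩ := exists_chain_antichain_card_lt ha hc hV
  have hr : #{a} ≤ r := hV {a} (singleton_subset_iff.2 ha.prop) (by simp)
  rw [card_singleton] at hr
  obtain ⟨s, rfl⟩ := Nat.exists_eq_add_one.2 hr
  obtain ⟨c', hc'⟩ := ih _ (sdiff_ssubset hKV ⟨a, haK⟩) fun A hA hAnti =>
    Nat.lt_succ_iff.1 (hVK A hA hAnti)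
  rw [coe_sdiff] at hc'
  exact ⟨_, hc'.insertChain hK⟩

theorem exists_chain_partition_iff {V : Set α} (hV : V.Finite) (r : ℕ) :
    (∃ f : Fin r → Set α, (∀ t, IsChain (· ≤ ·) (f t)) ∧ V = ⋃ t, f t ∧
        ∀ s t : Fin r, s ≠ t → Disjoint (f s) (f t)) ↔
      ∀ A : Finset α, ↑A ⊆ V → IsAntichain (· ≤ ·) (A : Set α) → #A ≤ r := by
  constructor
  · rintro ⟨f, hf, rfl, -⟩ A hAV hA
    have hcover : ∀ x ∈ ⋃ t, f t, ∃ t : ℕ, ∃ ht : t < r, x ∈ f ⟨t, ht⟩ := fun x hx => by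
      obtain ⟨t, hxt⟩ := Set.mem_iUnion.1 hx
      exact ⟨t, t.isLt, hxt⟩
    choose! c hcr hc using hcover
    refine IsChainColoring.card_le ⟨hcr, fun x hx y hy hxy => ?_⟩ hAV hA
    have hy' := hc y hy
    simp only [← hxy] at hy'
    exact (hf _).total (hc x hx) hy'
  · intro hA
    obtain ⟨c, hc⟩ := exists_isChainColoring hV.toFinset fun A hAV => hA A (by simpa using hAV)
    rw [Set.Finite.coe_toFinset] at hc
    refine ⟨fun t => {x ∈ V | c x = t}, fun t x hx y hy _ => ?_, ?_, fun s t hst => ?_⟩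
    · exact hc.comparable x hx.1 y hy.1 (hx.2.trans hy.2.symm)
    · ext x
      simp only [Set.mem_iUnion, Set.mem_ofPred_eq]
      exact ⟨fun hx => ⟨⟨c x, hc.lt x hx⟩, hx, rfl⟩, fun ⟨_, hx, _⟩ => hx⟩
    · exact Set.disjoint_left.2 fun x hxs hxt => hst (Fin.ext (hxs.2.symm.trans hxt.2))

end Dilworth

section AntichainMonomials

variable (R : Type*) {σ : Type*} [CommSemiring R]

def antichainMonomials (P : PartialOrder σ) (m : ℕ) : Set (MvPolynomial σ R) :=
  {p | ∃ A : Finset σ, IsAntichain P.le (A : Set σ) ∧ #A = m ∧ p = ∏ i ∈ A, X i}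

variable {R}

theorem prod_X_eq_monomial (A : Finset σ) :
    ∏ i ∈ A, (X i : MvPolynomial σ R) = monomial (∑ i ∈ A, Finsupp.single i 1) 1 :=
  (monomial_sum_one A _).symm

theorem sum_single_one_le_iff {A : Finset σ} {u : σ →₀ ℕ} :
    ∑ i ∈ A, Finsupp.single i 1 ≤ u ↔ A ⊆ u.support := by
  classical
  simp only [Finsupp.le_def, Finsupp.finsetSum_apply, Finsupp.single_apply, sum_ite_eq']
  refine ⟨fun h i hi => ?_, fun h i => ?_⟩
  · simpa [hi, Nat.one_le_iff_ne_zero] using h i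
  · split_ifs with hi
    · exact Nat.one_le_iff_ne_zero.2 (Finsupp.mem_support_iff.1 (h hi))
    · exact Nat.zero_le _

theorem mem_span_antichainMonomials_iff {P : PartialOrder σ} {m : ℕ} {p : MvPolynomial σ R} :
    p ∈ Ideal.span (antichainMonomials R P m) ↔
      ∀ u ∈ p.support, ∃ A ⊆ u.support, IsAntichain P.le (A : Set σ) ∧ #A = m := by
  have himage : antichainMonomials R P m = (fun s => monomial s 1) ''
      {s | ∃ A : Finset σ, IsAntichain P.le (A : Set σ) ∧ #A = m ∧
        s = ∑ i ∈ A, Finsupp.single i 1} := by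
    ext p
    simp only [antichainMonomials, Set.mem_image, Set.mem_ofPred_eq]
    constructor
    · rintro ⟨A, hA, hAm, rfl⟩
      exact ⟨_, ⟨A, hA, hAm, rfl⟩, (prod_X_eq_monomial A).symm⟩
    · rintro ⟨_, ⟨A, hA, hAm, rfl⟩, rfl⟩
      exact ⟨A, hA, hAm, (prod_X_eq_monomial A).symm⟩
  rw [himage, mem_ideal_span_monomial_image]
  refine forall₂_congr fun u _ => ⟨?_, ?_⟩
  · rintro ⟨_, ⟨A, hA, hAm, rfl⟩, hAu⟩
    exact ⟨A, sum_single_one_le_iff.1 hAu, hA, hAm⟩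
  · rintro ⟨A, hAu, hA, hAm⟩
    exact ⟨_, ⟨A, hA, hAm, rfl⟩, sum_single_one_le_iff.2 hAu⟩

theorem prod_X_mem_span_antichainMonomials {P : PartialOrder σ} {m : ℕ} {B : Finset σ}
    (hB : IsAntichain P.le (B : Set σ)) (hmB : m ≤ #B) :
    ∏ i ∈ B, (X i : MvPolynomial σ R) ∈ Ideal.span (antichainMonomials R P m) := by
  obtain ⟨A, hAB, hAm⟩ := exists_subset_card_eq hmB
  exact Ideal.mem_of_dvd _ (prod_dvd_prod_of_subset A B _ hAB)
    (Ideal.subset_span ⟨A, hB.subset (coe_subset.2 hAB), hAm, rfl⟩)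

theorem antichainMonomials_one (P : PartialOrder σ) :
    antichainMonomials R P 1 = Set.range X := by
  ext p
  constructor
  · rintro ⟨A, -, hA, rfl⟩
    obtain ⟨i, rfl⟩ := card_eq_one.1 hA
    exact ⟨i, (prod_singleton _ _).symm⟩
  · rintro ⟨i, rfl⟩
    exact ⟨{i}, by simp, card_singleton i, (prod_singleton _ _).symm⟩

theorem setOf_incomparable_eq_antichainMonomials_two (P : PartialOrder σ) :
    {p : MvPolynomial σ R | ∃ i j : σ, ¬ P.le i j ∧ ¬ P.le j i ∧ p = X i * X j} =
      antichainMonomials R P 2 := by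
  classical
  ext p
  constructor
  · rintro ⟨i, j, hij, hji, rfl⟩
    have hne : i ≠ j := fun h => hij (h ▸ P.le_refl i)
    refine ⟨{i, j}, ?_, card_pair hne, (prod_pair hne).symm⟩
    rw [coe_pair]
    exact IsAntichain.insert (by simp) (fun b hb _ => by simp_all) fun b hb _ => by simp_all
  · rintro ⟨A, hA, hA2, rfl⟩
    obtain ⟨i, j, hne, rfl⟩ := card_eq_two.1 hA2
    exact ⟨i, j, hA (by simp) (by simp) hne, hA (by simp) (by simp) hne.symm, prod_pair hne⟩

end AntichainMonomials

section KillOutside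

variable {R σ : Type*} [CommSemiring R] [DecidableEq σ]

noncomputable def killOutside (s : Finset σ) : MvPolynomial σ R →ₐ[R] MvPolynomial σ R :=
  aeval fun i => if i ∈ s then X i else 0

theorem killOutside_monomial (s : Finset σ) (u : σ →₀ ℕ) (a : R) :
    killOutside s (monomial u a) = if u.support ⊆ s then monomial u a else 0 := by
  rw [killOutside, aeval_monomial, algebraMap_eq]
  split_ifs with hu
  · rw [Finsupp.prod, prod_congr rfl fun i hi => by rw [if_pos (hu hi)], prod_X_pow_eq_monomial,
      C_mul_monomial, mul_one]
  · obtain ⟨i, hi, his⟩ := not_subset.1 hu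
    rw [Finsupp.prod, prod_eq_zero hi (by rw [if_neg his, zero_pow (Finsupp.mem_support_iff.1 hi)]),
      mul_zero]

theorem coeff_killOutside {s : Finset σ} {u : σ →₀ ℕ} (hu : u.support ⊆ s)
    (p : MvPolynomial σ R) : coeff u (killOutside s p) = coeff u p := by
  induction p using MvPolynomial.induction_on' with
  | monomial v a =>
    rw [killOutside_monomial]
    split_ifs with hv
    · rfl
    · rw [coeff_zero, coeff_monomial, if_neg (by rintro rfl; exact hv hu)]
  | add p q hp hq => rw [map_add, coeff_add, coeff_add, hp, hq]

theorem killOutside_prod_X {s A : Finset σ} (h : ¬ A ⊆ s) :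
    killOutside s (∏ i ∈ A, X i : MvPolynomial σ R) = 0 := by
  obtain ⟨i, hiA, his⟩ := not_subset.1 h
  rw [map_prod]
  exact prod_eq_zero hiA (by simp [killOutside, his])

end KillOutside

section Join

variable {K : Type*} [Field K] {n : ℕ}

/-- The substitution `x_i ↦ x_i` on `Y ∪ Z`, `y_i ↦ x_i` on `Y`, `z_i ↦ x_i` on `Z` and all other
variables `↦ 0` kills the ideal defining the join and fixes the monomials supported on `Y ∪ Z`. -/
theorem coeff_eq_zero_of_mem_joinIdeal {I J : Ideal (MvPolynomial (Fin n) K)}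
    {f : MvPolynomial (Fin n) K} (hf : f ∈ joinIdeal I J) {Y Z : Finset (Fin n)} (hYZ : Disjoint Y Z)
    (hI : I ≤ RingHom.ker (killOutside Y)) (hJ : J ≤ RingHom.ker (killOutside Z))
    {u : Fin n →₀ ℕ} (hu : u.support ⊆ Y ∪ Z) : coeff u f = 0 := by
  let e : Fin n ⊕ (Fin n ⊕ Fin n) → MvPolynomial (Fin n) K := Sum.elim
    (fun i => if i ∈ Y ∪ Z then X i else 0)
    (Sum.elim (fun i => if i ∈ Y then X i else 0) fun i => if i ∈ Z then X i else 0)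
  have h0 : aeval e (rename Sum.inl f) = 0 := by
    refine (sup_le (sup_le ?_ ?_) ?_ : _ ≤ RingHom.ker (aeval e)) hf
    · exact Ideal.map_le_iff_le_comap.2 fun q hq => (aeval_rename _ e q).trans (hI hq)
    · exact Ideal.map_le_iff_le_comap.2 fun q hq => (aeval_rename _ e q).trans (hJ hq)
    · refine Ideal.span_le.2 ?_
      rintro _ ⟨i, rfl⟩
      have : i ∈ Y → i ∉ Z := fun h => Finset.disjoint_left.1 hYZ h
      by_cases hY : i ∈ Y <;> by_cases hZ : i ∈ Z <;> simp_all [e]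
  rw [aeval_rename] at h0
  rw [← coeff_killOutside hu f]
  exact (congrArg (coeff u) h0).trans (coeff_zero u)

/-- Modulo the ideal defining the join, `x_i ≡ y_i + z_i`, so `∏_{i ∈ A} x_i` is congruent to
`∑_{S ⊆ A} ∏_{i ∈ S} y_i ∏_{i ∈ A \ S} z_i`. -/
theorem prod_X_mem_joinIdeal {I J : Ideal (MvPolynomial (Fin n) K)} {A : Finset (Fin n)}
    (h : ∀ S ⊆ A, ∏ i ∈ S, X i ∈ I ∨ ∏ i ∈ A \ S, X i ∈ J) : ∏ i ∈ A, X i ∈ joinIdeal I J := by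
  set M := I.map (rename fun i => Sum.inr (Sum.inl i)) ⊔
    J.map (rename fun i => Sum.inr (Sum.inr i)) ⊔
      Ideal.span {p : MvPolynomial (Fin n ⊕ (Fin n ⊕ Fin n)) K | ∃ i : Fin n,
        p = X (Sum.inr (Sum.inl i)) + X (Sum.inr (Sum.inr i)) - X (Sum.inl i)}
  have hxyz : ∀ i, Ideal.Quotient.mk M (X (Sum.inl i)) =
      Ideal.Quotient.mk M (X (Sum.inr (Sum.inl i)) + X (Sum.inr (Sum.inr i))) := fun i =>
    Ideal.Quotient.eq.2 <| by
      rw [← neg_sub]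
      exact M.neg_mem (Ideal.mem_sup_right (Ideal.subset_span ⟨i, rfl⟩))
  show rename Sum.inl (∏ i ∈ A, X i) ∈ M
  rw [← Ideal.Quotient.eq_zero_iff_mem, map_prod, map_prod]
  simp_rw [rename_X, hxyz, ← map_prod, Ideal.Quotient.eq_zero_iff_mem, prod_add]
  refine M.sum_mem fun S hS => ?_
  rcases h S (mem_powerset.1 hS) with hI | hJ
  · refine M.mul_mem_right _ (Ideal.mem_sup_left (Ideal.mem_sup_left ?_))
    simpa [map_prod] using Ideal.mem_map_of_mem (rename fun i => Sum.inr (Sum.inl i)) hI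
  · refine M.mul_mem_left _ (Ideal.mem_sup_left (Ideal.mem_sup_right ?_))
    simpa [map_prod] using Ideal.mem_map_of_mem (rename fun i => Sum.inr (Sum.inr i)) hJ

theorem span_antichainMonomials_le_ker_killOutside (P : PartialOrder (Fin n)) {m : ℕ}
    {Y : Finset (Fin n)} (hY : ∀ A ⊆ Y, IsAntichain P.le (A : Set (Fin n)) → #A < m) :
    Ideal.span (antichainMonomials K P m) ≤ RingHom.ker (killOutside Y) :=
  Ideal.span_le.2 fun _ ⟨A, hA, hAm, hp⟩ =>
    hp ▸ killOutside_prod_X fun hAY => (hY A hAY hA).ne hAm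

theorem joinIdeal_span_antichainMonomials (P : PartialOrder (Fin n)) (m : ℕ) :
    joinIdeal (Ideal.span (antichainMonomials K P (m + 1)))
      (Ideal.span (antichainMonomials K P 2)) = Ideal.span (antichainMonomials K P (m + 2)) := by
  let _ := P
  refine le_antisymm (fun f hf => mem_span_antichainMonomials_iff.2 fun u hu => ?_)
    (Ideal.span_le.2 ?_)
  · by_contra! hu'
    have hwidth : ∀ A ⊆ u.support, IsAntichain P.le (A : Set (Fin n)) → #A ≤ m + 1 :=
      fun A hAu hA => not_lt.1 fun hmA => by
        obtain ⟨B, hBA, hB⟩ := exists_subset_card_eq hmA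
        exact hu' B (hBA.trans hAu) (hA.subset (coe_subset.2 hBA)) hB
    obtain ⟨c, hc⟩ := exists_isChainColoring u.support hwidth
    refine mem_support_iff.1 hu <| coeff_eq_zero_of_mem_joinIdeal hf
      (Y := u.support.filter (c · < m)) (Z := u.support.filter (c · = m))
      (disjoint_filter.2 fun _ _ h => h.ne) ?_ ?_ fun x hx => ?_
    · refine span_antichainMonomials_le_ker_killOutside P fun A hA hAnti => Nat.lt_succ_of_le ?_
      refine IsChainColoring.card_le (c := c) ⟨fun x hx => (mem_filter.1 hx).2, ?_⟩ hA hAnti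
      exact fun x hx y hy => hc.comparable x (mem_filter.1 hx).1 y (mem_filter.1 hy).1
    · refine span_antichainMonomials_le_ker_killOutside P fun A hA hAnti => Nat.lt_succ_of_le ?_
      refine IsChainColoring.card_le (c := fun _ => 0) ⟨fun _ _ => Nat.one_pos, ?_⟩ hA hAnti
      exact fun x hx y hy _ => hc.comparable x (mem_filter.1 hx).1 y (mem_filter.1 hy).1
        ((mem_filter.1 hx).2.trans (mem_filter.1 hy).2.symm)
    · rw [← filter_or, mem_filter]
      exact ⟨hx, Nat.lt_or_eq_of_le (Nat.lt_succ_iff.1 (hc.lt x hx))⟩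
  · rintro _ ⟨A, hA, hAm, rfl⟩
    refine prod_X_mem_joinIdeal fun S hS => ?_
    by_cases hSm : m + 1 ≤ #S
    · exact .inl (prod_X_mem_span_antichainMonomials (hA.subset (coe_subset.2 hS)) hSm)
    · refine .inr (prod_X_mem_span_antichainMonomials (hA.subset (coe_subset.2 sdiff_subset)) ?_)
      rw [card_sdiff_of_subset hS]
      omega

theorem secantIdeal_span_antichainMonomials_two (P : PartialOrder (Fin n)) :
    ∀ r, secantIdeal (Ideal.span (antichainMonomials K P 2)) r =
      Ideal.span (antichainMonomials K P (r + 1))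
  | 0 => by rw [antichainMonomials_one]; rfl
  | 1 => rfl
  | r + 2 => by
    rw [secantIdeal, secantIdeal_span_antichainMonomials_two P (r + 1),
      joinIdeal_span_antichainMonomials]

end Join

theorem stmt_11_general (K : Type*) [Field K] (n r : ℕ)
    (P : PartialOrder (Fin n)) :
    (∀ V : Set (Fin n),
      (∃ f : Fin r → Set (Fin n), (∀ t, IsChain P.le (f t)) ∧ V = ⋃ t, f t ∧
          ∀ s t : Fin r, s ≠ t → Disjoint (f s) (f t)) ↔
        (∀ A : Finset (Fin n), ↑A ⊆ V → IsAntichain P.le (↑A : Set (Fin n)) →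
          A.card ≤ r)) ∧
    secantIdeal (Ideal.span {p : MvPolynomial (Fin n) K |
        ∃ i j : Fin n, ¬ P.le i j ∧ ¬ P.le j i ∧ p = X i * X j}) r
      = Ideal.span {p : MvPolynomial (Fin n) K |
          ∃ A : Finset (Fin n), IsAntichain P.le (↑A : Set (Fin n)) ∧ A.card = r + 1 ∧
            p = ∏ i ∈ A, X i} := by
  -- `P`, not the standard order of `Fin n`, must be the instance used by the order lemmas.
  let _ := P
  refine ⟨fun V => exists_chain_partition_iff V.toFinite r, ?_⟩
  rw [setOf_incomparable_eq_antichainMonomials_two]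
  exact secantIdeal_span_antichainMonomials_two P r

/-- (Dilworth) a subset `V` of a finite poset `P` on `[n]` can be partitioned
into `r` chains iff it contains no antichain of cardinality `r+1`; consequently, in
characteristic zero, the `r`-th secant of the Stanley–Reisner ideal `J(P)` (generated by
the 2-element antichains) is generated by the monomials `∏_{i ∈ A} x_i` for `A` an
antichain of cardinality `r+1`. -/
theorem stmt_11 (K : Type*) [Field K] [CharZero K] (n r : ℕ) (hr : 1 ≤ r)
    (P : PartialOrder (Fin n)) :
    (∀ V : Set (Fin n),
      (∃ f : Fin r → Set (Fin n), (∀ t, IsChain P.le (f t)) ∧ V = ⋃ t, f t ∧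
          ∀ s t : Fin r, s ≠ t → Disjoint (f s) (f t)) ↔
        (∀ A : Finset (Fin n), ↑A ⊆ V → IsAntichain P.le (↑A : Set (Fin n)) →
          A.card ≤ r)) ∧
    secantIdeal (Ideal.span {p : MvPolynomial (Fin n) K |
        ∃ i j : Fin n, ¬ P.le i j ∧ ¬ P.le j i ∧ p = X i * X j}) r
      = Ideal.span {p : MvPolynomial (Fin n) K |
          ∃ A : Finset (Fin n), IsAntichain P.le (↑A : Set (Fin n)) ∧ A.card = r + 1 ∧
            p = ∏ i ∈ A, X i} :=
  stmt_11_general K n r P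
end
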